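/- arXiv:1212.1699 — 6 statements merged into one kernel-verified Lean document; each statement's English description precedes it below -/
import Mathlib

section
/- Let G be a group and let a, b, c, d₁, d₂, ψ ∈ G. Assume that (a*b*c)^4 = d₁*d₂, that the four elements a, c, d₁, d₂ commute pairwise, that ψ*a*ψ⁻¹ = d₂, and that ψ*d₁*ψ⁻¹ = c. Set T = (b*c)*(a*b*c)^2*(a*b). Then for every natural number m, T^m = (a⁻ᵐ*d₁ᵐ)*ψ*(a⁻ᵐ*d₁ᵐ)⁻¹*ψ⁻¹; in particular every power of T is a commutator in G. -/
/-- Group-theoretic content of Lemma 3.2: every power of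
`T = (b*c)*(a*b*c)^2*(a*b)` is the explicit commutator
`(a⁻ᵐ d₁ᵐ) ψ (a⁻ᵐ d₁ᵐ)⁻¹ ψ⁻¹`; in particular it is a commutator. -/
theorem power_is_commutator {G : Type*} [Group G] (a b c d₁ d₂ ψ : G)
    (hchain : (a * b * c) ^ 4 = d₁ * d₂)
    (hac : a * c = c * a) (had₁ : a * d₁ = d₁ * a) (had₂ : a * d₂ = d₂ * a)
    (hcd₁ : c * d₁ = d₁ * c) (hcd₂ : c * d₂ = d₂ * c) (hd₁d₂ : d₁ * d₂ = d₂ * d₁)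
    (hψa : ψ * a * ψ⁻¹ = d₂) (hψd₁ : ψ * d₁ * ψ⁻¹ = c) :
    ∀ m : ℕ,
      ((b * c) * (a * b * c) ^ 2 * (a * b)) ^ m =
        ((a ^ m)⁻¹ * d₁ ^ m) * ψ * ((a ^ m)⁻¹ * d₁ ^ m)⁻¹ * ψ⁻¹ ∧
      ∃ x y : G, ((b * c) * (a * b * c) ^ 2 * (a * b)) ^ m = x * y * x⁻¹ * y⁻¹ := by
  have Cac : Commute a c := hac
  have Cad₁ : Commute a d₁ := had₁
  have Cad₂ : Commute a d₂ := had₂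
  have Ccd₁ : Commute c d₁ := hcd₁
  have Ccd₂ : Commute c d₂ := hcd₂
  have Cdd : Commute d₁ d₂ := hd₁d₂
  set u := a⁻¹ * d₁ with hu
  set v := d₂ * c⁻¹ with hv
  have Cuv : Commute u v :=
    (Cad₂.inv_left.mul_right Cac.inv_inv).mul_left (Cdd.mul_right Ccd₁.symm.inv_right)
  have hT : (b * c) * (a * b * c) ^ 2 * (a * b) = u * v := by
    have h1 : (b * c) * (a * b * c) ^ 2 * (a * b) = a⁻¹ * (a * b * c) ^ 4 * c⁻¹ := by
      simp only [pow_succ, pow_zero, one_mul]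
      group
    rw [h1, hchain, hu, hv]; group
  have hum : ∀ m : ℕ, u ^ m = (a ^ m)⁻¹ * d₁ ^ m := by
    intro m
    rw [hu, Cad₁.inv_left.mul_pow, inv_pow]
  have hconj : ψ * u⁻¹ * ψ⁻¹ = c⁻¹ * d₂ := by
    have key : ψ * u⁻¹ * ψ⁻¹ = (ψ * d₁ * ψ⁻¹)⁻¹ * (ψ * a * ψ⁻¹) := by rw [hu]; group
    rw [hψa, hψd₁] at key; exact key
  intro m
  have hconjm : ψ * (u ^ m)⁻¹ * ψ⁻¹ = (c⁻¹ * d₂) ^ m := by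
    have := map_pow (MulAut.conj ψ) u⁻¹ m
    simp only [MulAut.conj_apply, hconj] at this
    rw [← inv_pow, this]
  have hv' : v ^ m = (c⁻¹ * d₂) ^ m := by rw [hv, Ccd₂.inv_left.eq]
  have main : ((b * c) * (a * b * c) ^ 2 * (a * b)) ^ m =
      ((a ^ m)⁻¹ * d₁ ^ m) * ψ * ((a ^ m)⁻¹ * d₁ ^ m)⁻¹ * ψ⁻¹ := by
    rw [hT, Cuv.mul_pow, ← hum m, hv', ← hconjm]
    group
  exact ⟨main, (a ^ m)⁻¹ * d₁ ^ m, ψ, main⟩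
end

section
/- Given swap data (G, H, ι₁, ι₂, ι₃, ι₄, ρ₁₂, ρ₂₃, ρ₃₄, ρ₁₃, ρ₂₄), for all A, B ∈ H the following identity holds in G: (ι₁(B)⁻¹*ι₁(A)⁻¹*ι₁(B)) * (ι₂(B)⁻¹*ι₂(A)⁻¹) * ι₃(B)⁻¹ * (ι₂(B)*ρ₂₄*ι₂(B)⁻¹) * (ι₁(A)*ρ₁₃*ι₁(A)⁻¹) * ρ₃₄ * ρ₂₃ * ρ₁₂ * ι₃(B) * (ι₂(A)*ι₂(B)) * (ι₁(B)⁻¹*ι₁(A)*ι₁(B)) = ι₁(B⁻¹*A⁻¹*B*A) * ρ₂₄ * ρ₁₃ * ρ₃₄ * ρ₂₃ * ρ₁₂. -/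
/-- Swap data: two groups `G`, `H`, four commuting implantings `ι₁, …, ι₄ : H →* G`
and five "swap" elements `ρ₁₂, ρ₂₃, ρ₃₄, ρ₁₃, ρ₂₄` of `G`, such that each `ρᵢⱼ`
exchanges the images of `ιᵢ` and `ιⱼ` under conjugation and commutes with the
images of the remaining implantings. -/
structure SwapData (G H : Type*) [Group G] [Group H] where
  ι₁ : H →* G
  ι₂ : H →* G
  ι₃ : H →* G
  ι₄ : H →* G
  ρ12 : G
  ρ23 : G
  ρ34 : G
  ρ13 : G
  ρ24 : G
  comm12 : ∀ x y : H, ι₁ x * ι₂ y = ι₂ y * ι₁ x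
  comm13 : ∀ x y : H, ι₁ x * ι₃ y = ι₃ y * ι₁ x
  comm14 : ∀ x y : H, ι₁ x * ι₄ y = ι₄ y * ι₁ x
  comm23 : ∀ x y : H, ι₂ x * ι₃ y = ι₃ y * ι₂ x
  comm24 : ∀ x y : H, ι₂ x * ι₄ y = ι₄ y * ι₂ x
  comm34 : ∀ x y : H, ι₃ x * ι₄ y = ι₄ y * ι₃ x
  swap12_a : ∀ C : H, ι₁ C * ρ12 = ρ12 * ι₂ C
  swap12_b : ∀ C : H, ι₂ C * ρ12 = ρ12 * ι₁ C
  swap23_a : ∀ C : H, ι₂ C * ρ23 = ρ23 * ι₃ C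
  swap23_b : ∀ C : H, ι₃ C * ρ23 = ρ23 * ι₂ C
  swap34_a : ∀ C : H, ι₃ C * ρ34 = ρ34 * ι₄ C
  swap34_b : ∀ C : H, ι₄ C * ρ34 = ρ34 * ι₃ C
  swap13_a : ∀ C : H, ι₁ C * ρ13 = ρ13 * ι₃ C
  swap13_b : ∀ C : H, ι₃ C * ρ13 = ρ13 * ι₁ C
  swap24_a : ∀ C : H, ι₂ C * ρ24 = ρ24 * ι₄ C
  swap24_b : ∀ C : H, ι₄ C * ρ24 = ρ24 * ι₂ C
  fix12_3 : ∀ C : H, ι₃ C * ρ12 = ρ12 * ι₃ C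
  fix12_4 : ∀ C : H, ι₄ C * ρ12 = ρ12 * ι₄ C
  fix23_1 : ∀ C : H, ι₁ C * ρ23 = ρ23 * ι₁ C
  fix23_4 : ∀ C : H, ι₄ C * ρ23 = ρ23 * ι₄ C
  fix34_1 : ∀ C : H, ι₁ C * ρ34 = ρ34 * ι₁ C
  fix34_2 : ∀ C : H, ι₂ C * ρ34 = ρ34 * ι₂ C
  fix13_2 : ∀ C : H, ι₂ C * ρ13 = ρ13 * ι₂ C
  fix13_4 : ∀ C : H, ι₄ C * ρ13 = ρ13 * ι₄ C
  fix24_1 : ∀ C : H, ι₁ C * ρ24 = ρ24 * ι₁ C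
  fix24_3 : ∀ C : H, ι₃ C * ρ24 = ρ24 * ι₃ C


namespace SwapData
variable {G H : Type*} [Group G] [Group H] (D : SwapData G H)

lemma swap12_a' (C : H) (x : G) : D.ι₁ C * (D.ρ12 * x) = D.ρ12 * (D.ι₂ C * x) := by rw [← mul_assoc, D.swap12_a, mul_assoc]
lemma swap12_b' (C : H) (x : G) : D.ι₂ C * (D.ρ12 * x) = D.ρ12 * (D.ι₁ C * x) := by rw [← mul_assoc, D.swap12_b, mul_assoc]
lemma swap23_a' (C : H) (x : G) : D.ι₂ C * (D.ρ23 * x) = D.ρ23 * (D.ι₃ C * x) := by rw [← mul_assoc, D.swap23_a, mul_assoc]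
lemma swap23_b' (C : H) (x : G) : D.ι₃ C * (D.ρ23 * x) = D.ρ23 * (D.ι₂ C * x) := by rw [← mul_assoc, D.swap23_b, mul_assoc]
lemma swap34_a' (C : H) (x : G) : D.ι₃ C * (D.ρ34 * x) = D.ρ34 * (D.ι₄ C * x) := by rw [← mul_assoc, D.swap34_a, mul_assoc]
lemma swap34_b' (C : H) (x : G) : D.ι₄ C * (D.ρ34 * x) = D.ρ34 * (D.ι₃ C * x) := by rw [← mul_assoc, D.swap34_b, mul_assoc]
lemma swap13_a' (C : H) (x : G) : D.ι₁ C * (D.ρ13 * x) = D.ρ13 * (D.ι₃ C * x) := by rw [← mul_assoc, D.swap13_a, mul_assoc]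
lemma swap13_b' (C : H) (x : G) : D.ι₃ C * (D.ρ13 * x) = D.ρ13 * (D.ι₁ C * x) := by rw [← mul_assoc, D.swap13_b, mul_assoc]
lemma swap24_a' (C : H) (x : G) : D.ι₂ C * (D.ρ24 * x) = D.ρ24 * (D.ι₄ C * x) := by rw [← mul_assoc, D.swap24_a, mul_assoc]
lemma swap24_b' (C : H) (x : G) : D.ι₄ C * (D.ρ24 * x) = D.ρ24 * (D.ι₂ C * x) := by rw [← mul_assoc, D.swap24_b, mul_assoc]
lemma fix12_3' (C : H) (x : G) : D.ι₃ C * (D.ρ12 * x) = D.ρ12 * (D.ι₃ C * x) := by rw [← mul_assoc, D.fix12_3, mul_assoc]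
lemma fix12_4' (C : H) (x : G) : D.ι₄ C * (D.ρ12 * x) = D.ρ12 * (D.ι₄ C * x) := by rw [← mul_assoc, D.fix12_4, mul_assoc]
lemma fix23_1' (C : H) (x : G) : D.ι₁ C * (D.ρ23 * x) = D.ρ23 * (D.ι₁ C * x) := by rw [← mul_assoc, D.fix23_1, mul_assoc]
lemma fix23_4' (C : H) (x : G) : D.ι₄ C * (D.ρ23 * x) = D.ρ23 * (D.ι₄ C * x) := by rw [← mul_assoc, D.fix23_4, mul_assoc]
lemma fix34_1' (C : H) (x : G) : D.ι₁ C * (D.ρ34 * x) = D.ρ34 * (D.ι₁ C * x) := by rw [← mul_assoc, D.fix34_1, mul_assoc]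
lemma fix34_2' (C : H) (x : G) : D.ι₂ C * (D.ρ34 * x) = D.ρ34 * (D.ι₂ C * x) := by rw [← mul_assoc, D.fix34_2, mul_assoc]
lemma fix13_2' (C : H) (x : G) : D.ι₂ C * (D.ρ13 * x) = D.ρ13 * (D.ι₂ C * x) := by rw [← mul_assoc, D.fix13_2, mul_assoc]
lemma fix13_4' (C : H) (x : G) : D.ι₄ C * (D.ρ13 * x) = D.ρ13 * (D.ι₄ C * x) := by rw [← mul_assoc, D.fix13_4, mul_assoc]
lemma fix24_1' (C : H) (x : G) : D.ι₁ C * (D.ρ24 * x) = D.ρ24 * (D.ι₁ C * x) := by rw [← mul_assoc, D.fix24_1, mul_assoc]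
lemma fix24_3' (C : H) (x : G) : D.ι₃ C * (D.ρ24 * x) = D.ρ24 * (D.ι₃ C * x) := by rw [← mul_assoc, D.fix24_3, mul_assoc]
lemma comm12' (x y : H) : D.ι₂ y * D.ι₁ x = D.ι₁ x * D.ι₂ y := (D.comm12 x y).symm
lemma comm12'' (x y : H) (z : G) : D.ι₂ y * (D.ι₁ x * z) = D.ι₁ x * (D.ι₂ y * z) := by rw [← mul_assoc, D.comm12' , mul_assoc]
lemma comm13' (x y : H) : D.ι₃ y * D.ι₁ x = D.ι₁ x * D.ι₃ y := (D.comm13 x y).symm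
lemma comm13'' (x y : H) (z : G) : D.ι₃ y * (D.ι₁ x * z) = D.ι₁ x * (D.ι₃ y * z) := by rw [← mul_assoc, D.comm13' , mul_assoc]
lemma comm14' (x y : H) : D.ι₄ y * D.ι₁ x = D.ι₁ x * D.ι₄ y := (D.comm14 x y).symm
lemma comm14'' (x y : H) (z : G) : D.ι₄ y * (D.ι₁ x * z) = D.ι₁ x * (D.ι₄ y * z) := by rw [← mul_assoc, D.comm14' , mul_assoc]
lemma comm23' (x y : H) : D.ι₃ y * D.ι₂ x = D.ι₂ x * D.ι₃ y := (D.comm23 x y).symm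
lemma comm23'' (x y : H) (z : G) : D.ι₃ y * (D.ι₂ x * z) = D.ι₂ x * (D.ι₃ y * z) := by rw [← mul_assoc, D.comm23' , mul_assoc]
lemma comm24' (x y : H) : D.ι₄ y * D.ι₂ x = D.ι₂ x * D.ι₄ y := (D.comm24 x y).symm
lemma comm24'' (x y : H) (z : G) : D.ι₄ y * (D.ι₂ x * z) = D.ι₂ x * (D.ι₄ y * z) := by rw [← mul_assoc, D.comm24' , mul_assoc]
lemma comm34' (x y : H) : D.ι₄ y * D.ι₃ x = D.ι₃ x * D.ι₄ y := (D.comm34 x y).symm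
lemma comm34'' (x y : H) (z : G) : D.ι₄ y * (D.ι₃ x * z) = D.ι₃ x * (D.ι₄ y * z) := by rw [← mul_assoc, D.comm34' , mul_assoc]
lemma merge₁ (x y : H) (z : G) : D.ι₁ x * (D.ι₁ y * z) = D.ι₁ (x*y) * z := by rw [← mul_assoc, ← map_mul]
lemma merge₁' (x y : H) : D.ι₁ x * D.ι₁ y = D.ι₁ (x*y) := (map_mul _ _ _).symm
lemma merge₂ (x y : H) (z : G) : D.ι₂ x * (D.ι₂ y * z) = D.ι₂ (x*y) * z := by rw [← mul_assoc, ← map_mul]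
lemma merge₂' (x y : H) : D.ι₂ x * D.ι₂ y = D.ι₂ (x*y) := (map_mul _ _ _).symm
lemma merge₃ (x y : H) (z : G) : D.ι₃ x * (D.ι₃ y * z) = D.ι₃ (x*y) * z := by rw [← mul_assoc, ← map_mul]
lemma merge₃' (x y : H) : D.ι₃ x * D.ι₃ y = D.ι₃ (x*y) := (map_mul _ _ _).symm
lemma merge₄ (x y : H) (z : G) : D.ι₄ x * (D.ι₄ y * z) = D.ι₄ (x*y) * z := by rw [← mul_assoc, ← map_mul]
lemma merge₄' (x y : H) : D.ι₄ x * D.ι₄ y = D.ι₄ (x*y) := (map_mul _ _ _).symm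


end SwapData

/-- The key computation in the proof of Theorem 3.3: conjugating the individual
swap maps realizes the commutator `ι₁([A,B])` times the product of the swaps. -/
theorem commutator_times_swaps {G H : Type*} [Group G] [Group H]
    (D : SwapData G H) (A B : H) :
    ((D.ι₁ B)⁻¹ * (D.ι₁ A)⁻¹ * D.ι₁ B) * ((D.ι₂ B)⁻¹ * (D.ι₂ A)⁻¹) * (D.ι₃ B)⁻¹ *
        (D.ι₂ B * D.ρ24 * (D.ι₂ B)⁻¹) * (D.ι₁ A * D.ρ13 * (D.ι₁ A)⁻¹) *
        D.ρ34 * D.ρ23 * D.ρ12 * D.ι₃ B * (D.ι₂ A * D.ι₂ B) *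
        ((D.ι₁ B)⁻¹ * D.ι₁ A * D.ι₁ B) =
      D.ι₁ (B⁻¹ * A⁻¹ * B * A) * D.ρ24 * D.ρ13 * D.ρ34 * D.ρ23 * D.ρ12 := by
  simp only [← map_inv, mul_assoc,
    D.swap12_a, D.swap12_b, D.swap23_a, D.swap23_b, D.swap34_a, D.swap34_b,
    D.swap13_a, D.swap13_b, D.swap24_a, D.swap24_b,
    D.fix12_3, D.fix12_4, D.fix23_1, D.fix23_4, D.fix34_1, D.fix34_2,
    D.fix13_2, D.fix13_4, D.fix24_1, D.fix24_3,
    D.swap12_a', D.swap12_b', D.swap23_a', D.swap23_b', D.swap34_a', D.swap34_b',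
    D.swap13_a', D.swap13_b', D.swap24_a', D.swap24_b',
    D.fix12_3', D.fix12_4', D.fix23_1', D.fix23_4', D.fix34_1', D.fix34_2',
    D.fix13_2', D.fix13_4', D.fix24_1', D.fix24_3', map_mul]
  simp only [D.comm12', D.comm13', D.comm14', D.comm23', D.comm24', D.comm34',
    D.comm12'', D.comm13'', D.comm14'', D.comm23'', D.comm24'', D.comm34'',
    D.merge₁, D.merge₂, D.merge₃, D.merge₄, D.merge₁', D.merge₂', D.merge₃', D.merge₄',
    mul_right_inj]
  group
  simp
end

section
/- Given swap data (G, H, ι₁, ι₂, ι₃, ι₄, ρ₁₂, ρ₂₃, ρ₃₄, ρ₁₃, ρ₂₄), let S ⊆ G be closed under conjugation, let r, k, m be natural numbers, and suppose: each of ρ₁₂, ρ₂₃, ρ₃₄, ρ₁₃, ρ₂₄ is a product of r elements of S; t ∈ H is such that ι₁(t) is a product of k elements of S; and there exist A, B ∈ H with t^m * (B⁻¹*A⁻¹*B*A) = 1 in H. Then Φ = ρ₂₄*ρ₁₃*ρ₃₄*ρ₂₃*ρ₁₂ is a product of k*m + 5*r elements of S. -/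
/-- `x` is a product of `n` elements of `S`. -/
def IsProductOf {G : Type*} [Monoid G] (S : Set G) (n : ℕ) (x : G) : Prop :=
  ∃ l : List G, l.length = n ∧ (∀ y ∈ l, y ∈ S) ∧ l.prod = x

theorem push_aux {G : Type*} [Semigroup G] {a b c : G} (h : a * b = b * c) (x : G) :
    a * (b * x) = b * (c * x) := by rw [← mul_assoc, h, mul_assoc]

theorem merge_aux {M N : Type*} [Monoid M] [Monoid N] (f : M →* N) (x y : M) (z : N) :
    f x * (f y * z) = f (x * y) * z := by rw [map_mul, mul_assoc]

theorem prodOf_mul {G : Type*} [Monoid G] {S : Set G} {n p : ℕ} {x y : G}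
    (hx : IsProductOf S n x) (hy : IsProductOf S p y) : IsProductOf S (n + p) (x * y) := by
  obtain ⟨l, hl, hm, hp⟩ := hx
  obtain ⟨l', hl', hm', hp'⟩ := hy
  refine ⟨l ++ l', by simp [hl, hl'], ?_, by simp [hp, hp']⟩
  intro a ha
  rcases List.mem_append.mp ha with h | h
  exacts [hm a h, hm' a h]

theorem conj_list_prod {G : Type*} [Group G] (g : G) (l : List G) :
    (l.map (fun s => g * s * g⁻¹)).prod = g * l.prod * g⁻¹ := by
  induction l with
  | nil => simp
  | cons a l ih =>
    rw [List.map_cons, List.prod_cons, ih, List.prod_cons]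
    group

theorem prodOf_conj {G : Type*} [Group G] {S : Set G}
    (hS : ∀ g s : G, s ∈ S → g * s * g⁻¹ ∈ S) {n : ℕ} {x : G}
    (hx : IsProductOf S n x) (g : G) : IsProductOf S n (g * x * g⁻¹) := by
  obtain ⟨l, hl, hm, hp⟩ := hx
  refine ⟨l.map (fun s => g * s * g⁻¹), by simp [hl], ?_, ?_⟩
  · intro a ha
    obtain ⟨s, hs, rfl⟩ := List.mem_map.mp ha
    exact hS g s (hm s hs)
  · rw [conj_list_prod, hp]

theorem prodOf_pow {G : Type*} [Monoid G] {S : Set G} {k : ℕ} {x : G}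
    (hx : IsProductOf S k x) (m : ℕ) : IsProductOf S (k * m) (x ^ m) := by
  induction m with
  | zero => exact ⟨[], rfl, by simp, by simp⟩
  | succ m ih =>
    rw [pow_succ, Nat.mul_succ]
    exact prodOf_mul ih hx

/-- Abstract form of Theorem 3.3: the element `Φ = ρ₂₄ρ₁₃ρ₃₄ρ₂₃ρ₁₂` is a product
of `k*m + 5*r` elements of the conjugation-closed set `S`. -/
theorem phi_long_positive_factorization {G H : Type*} [Group G] [Group H]
    (D : SwapData G H) (S : Set G)
    (hS : ∀ g s : G, s ∈ S → g * s * g⁻¹ ∈ S) (r k m : ℕ)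
    (h12 : IsProductOf S r D.ρ12) (h23 : IsProductOf S r D.ρ23)
    (h34 : IsProductOf S r D.ρ34) (h13 : IsProductOf S r D.ρ13)
    (h24 : IsProductOf S r D.ρ24)
    (t : H) (ht : IsProductOf S k (D.ι₁ t))
    (hcomm : ∃ A B : H, t ^ m * (B⁻¹ * A⁻¹ * B * A) = 1) :
    IsProductOf S (k * m + 5 * r) (D.ρ24 * D.ρ13 * D.ρ34 * D.ρ23 * D.ρ12) := by
  obtain ⟨A, B, hAB⟩ := hcomm
  have htm : t ^ m = A⁻¹ * B⁻¹ * A * B := by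
    have h1 : t ^ m = (B⁻¹ * A⁻¹ * B * A)⁻¹ := (mul_eq_one_iff_eq_inv).mp hAB
    rw [h1]; group
  have htm' : (D.ι₁ t) ^ m = D.ι₁ A⁻¹ * (D.ι₁ B⁻¹ * (D.ι₁ A * D.ι₁ B)) := by
    rw [← map_pow, htm]; simp [map_mul, mul_assoc]
  -- the key algebraic identity
  set g₁ : G := D.ι₄ B with hg₁
  set g₂ : G := D.ι₁ B⁻¹ * D.ι₃ A with hg₂
  set g₃ : G := D.ι₃ B * D.ι₄ A⁻¹ with hg₃
  set g₄ : G := D.ι₃ B with hg₄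
  set g₅ : G := D.ι₁ B⁻¹ * D.ι₁ A⁻¹ with hg₅
  have s12a := fun C x => push_aux (D.swap12_a C) x
  have s12b := fun C x => push_aux (D.swap12_b C) x
  have s23a := fun C x => push_aux (D.swap23_a C) x
  have s23b := fun C x => push_aux (D.swap23_b C) x
  have s34a := fun C x => push_aux (D.swap34_a C) x
  have s34b := fun C x => push_aux (D.swap34_b C) x
  have s13a := fun C x => push_aux (D.swap13_a C) x
  have s13b := fun C x => push_aux (D.swap13_b C) x
  have s24a := fun C x => push_aux (D.swap24_a C) x
  have s24b := fun C x => push_aux (D.swap24_b C) x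
  have f123 := fun C x => push_aux (D.fix12_3 C) x
  have f124 := fun C x => push_aux (D.fix12_4 C) x
  have f231 := fun C x => push_aux (D.fix23_1 C) x
  have f234 := fun C x => push_aux (D.fix23_4 C) x
  have f341 := fun C x => push_aux (D.fix34_1 C) x
  have f342 := fun C x => push_aux (D.fix34_2 C) x
  have f132 := fun C x => push_aux (D.fix13_2 C) x
  have f134 := fun C x => push_aux (D.fix13_4 C) x
  have f241 := fun C x => push_aux (D.fix24_1 C) x
  have f243 := fun C x => push_aux (D.fix24_3 C) x
  have c12 := fun (x y : H) => (D.comm12 x y).symm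
  have c13 := fun (x y : H) => (D.comm13 x y).symm
  have c14 := fun (x y : H) => (D.comm14 x y).symm
  have c23 := fun (x y : H) => (D.comm23 x y).symm
  have c24 := fun (x y : H) => (D.comm24 x y).symm
  have c34 := fun (x y : H) => (D.comm34 x y).symm
  have c12' := fun (x y : H) (z : G) => push_aux (D.comm12 x y).symm z
  have c13' := fun (x y : H) (z : G) => push_aux (D.comm13 x y).symm z
  have c14' := fun (x y : H) (z : G) => push_aux (D.comm14 x y).symm z
  have c23' := fun (x y : H) (z : G) => push_aux (D.comm23 x y).symm z
  have c24' := fun (x y : H) (z : G) => push_aux (D.comm24 x y).symm z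
  have c34' := fun (x y : H) (z : G) => push_aux (D.comm34 x y).symm z
  have m1 := fun (x y : H) (z : G) => merge_aux D.ι₁ x y z
  have m2 := fun (x y : H) (z : G) => merge_aux D.ι₂ x y z
  have m3 := fun (x y : H) (z : G) => merge_aux D.ι₃ x y z
  have m4 := fun (x y : H) (z : G) => merge_aux D.ι₄ x y z
  have m1' := fun (x y : H) => (map_mul D.ι₁ x y).symm
  have m2' := fun (x y : H) => (map_mul D.ι₂ x y).symm
  have m3' := fun (x y : H) => (map_mul D.ι₃ x y).symm
  have m4' := fun (x y : H) => (map_mul D.ι₄ x y).symm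
  have key : D.ρ24 * D.ρ13 * D.ρ34 * D.ρ23 * D.ρ12 =
      (D.ι₁ A⁻¹ * (D.ι₁ B⁻¹ * (D.ι₁ A * D.ι₁ B))) *
      ((g₁ * D.ρ24 * g₁⁻¹) * ((g₂ * D.ρ13 * g₂⁻¹) * ((g₃ * D.ρ34 * g₃⁻¹) *
        ((g₄ * D.ρ23 * g₄⁻¹) * (g₅ * D.ρ12 * g₅⁻¹))))) := by
    rw [hg₁, hg₂, hg₃, hg₄, hg₅]
    simp only [mul_inv_rev, ← map_inv, inv_inv, mul_assoc,
      s12a, s12b, s23a, s23b, s34a, s34b, s13a, s13b, s24a, s24b,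
      f123, f124, f231, f234, f341, f342, f132, f134, f241, f243,
      D.swap12_a, D.swap12_b, D.swap23_a, D.swap23_b, D.swap34_a, D.swap34_b,
      D.swap13_a, D.swap13_b, D.swap24_a, D.swap24_b,
      D.fix12_3, D.fix12_4, D.fix23_1, D.fix23_4, D.fix34_1, D.fix34_2,
      D.fix13_2, D.fix13_4, D.fix24_1, D.fix24_3,
      c12, c13, c14, c23, c24, c34, c12', c13', c14', c23', c24', c34',
      m1, m2, m3, m4, m1', m2', m3', m4',
      inv_mul_cancel_left, mul_inv_cancel_left, inv_mul_cancel, mul_inv_cancel,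
      one_mul, mul_one, map_one, inv_inv]
  have hpow : IsProductOf S (k * m) ((D.ι₁ t) ^ m) := prodOf_pow ht m
  rw [htm'] at hpow
  have happ : IsProductOf S (k * m + (r + (r + (r + (r + r)))))
      (D.ρ24 * D.ρ13 * D.ρ34 * D.ρ23 * D.ρ12) := by
    rw [key]
    exact prodOf_mul hpow (prodOf_mul (prodOf_conj hS h24 g₁)
      (prodOf_mul (prodOf_conj hS h13 g₂) (prodOf_mul (prodOf_conj hS h34 g₃)
        (prodOf_mul (prodOf_conj hS h23 g₄) (prodOf_conj hS h12 g₅)))))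
  have harith : k * m + (r + (r + (r + (r + r)))) = k * m + 5 * r := by ring
  rwa [harith] at happ
end

section
/- Let G be a group and let d₁₂, d₂₃, d₃₄, m₁, m₂, m₃, m₄ ∈ G be such that m₁, m₂, m₃, m₄ commute pairwise and, for each pair (i,j) ∈ {(1,2),(2,3),(3,4)}: d_{ij}*m_i = m_j*d_{ij}, d_{ij}*m_j = m_i*d_{ij}, and d_{ij}*m_k = m_k*d_{ij} for every k ∈ {1,2,3,4} with k ∉ {i,j}. Set r_{ij} = d_{ij}*m_j⁻¹*m_i⁻¹. Then (r₃₄*r₂₃*r₁₂)^4 = (d₃₄*d₂₃*d₁₂)^4 * m₁⁻⁶*m₂⁻⁶*m₃⁻⁶*m₄⁻⁶. -/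
private lemma push_inv {G : Type*} [Group G] {d a b : G} (h : d * a = b * d) (x : G) :
    b⁻¹ * (d * x) = d * (a⁻¹ * x) := by
  have : b⁻¹ * d = d * a⁻¹ := by
    rw [inv_mul_eq_iff_eq_mul, ← mul_assoc, ← h, mul_assoc, mul_inv_cancel, mul_one]
  rw [← mul_assoc, this, mul_assoc]

private lemma push_inv' {G : Type*} [Group G] {d a b : G} (h : d * a = b * d) :
    b⁻¹ * d = d * a⁻¹ := by
  rw [inv_mul_eq_iff_eq_mul, ← mul_assoc, ← h, mul_assoc, mul_inv_cancel, mul_one]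

private lemma comm_inv' {G : Type*} [Group G] {a b : G} (h : a * b = b * a) :
    b⁻¹ * a⁻¹ = a⁻¹ * b⁻¹ := by rw [← mul_inv_rev, h, mul_inv_rev]

private lemma comm_inv {G : Type*} [Group G] {a b : G} (h : a * b = b * a) (x : G) :
    b⁻¹ * (a⁻¹ * x) = a⁻¹ * (b⁻¹ * x) := by
  have : b⁻¹ * a⁻¹ = a⁻¹ * b⁻¹ := by rw [← mul_inv_rev, h, mul_inv_rev]
  rw [← mul_assoc, this, mul_assoc]

/-- Group-theoretic core of Lemma 4.1: pushing the multitwist factors of the swap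
maps `rᵢⱼ = dᵢⱼ * mⱼ⁻¹ * mᵢ⁻¹` to the right through the half-twists `dᵢⱼ`, each index
acquires total exponent `−6` in `(r₃₄ r₂₃ r₁₂)⁴`. -/
theorem swaps_fourth_power {G : Type*} [Group G] (d₁₂ d₂₃ d₃₄ m₁ m₂ m₃ m₄ : G)
    (h12 : m₁ * m₂ = m₂ * m₁) (h13 : m₁ * m₃ = m₃ * m₁) (h14 : m₁ * m₄ = m₄ * m₁)
    (h23 : m₂ * m₃ = m₃ * m₂) (h24 : m₂ * m₄ = m₄ * m₂) (h34 : m₃ * m₄ = m₄ * m₃)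
    (hd12a : d₁₂ * m₁ = m₂ * d₁₂) (hd12b : d₁₂ * m₂ = m₁ * d₁₂)
    (hd12c : d₁₂ * m₃ = m₃ * d₁₂) (hd12d : d₁₂ * m₄ = m₄ * d₁₂)
    (hd23a : d₂₃ * m₂ = m₃ * d₂₃) (hd23b : d₂₃ * m₃ = m₂ * d₂₃)
    (hd23c : d₂₃ * m₁ = m₁ * d₂₃) (hd23d : d₂₃ * m₄ = m₄ * d₂₃)
    (hd34a : d₃₄ * m₃ = m₄ * d₃₄) (hd34b : d₃₄ * m₄ = m₃ * d₃₄)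
    (hd34c : d₃₄ * m₁ = m₁ * d₃₄) (hd34d : d₃₄ * m₂ = m₂ * d₃₄) :
    ((d₃₄ * m₄⁻¹ * m₃⁻¹) * (d₂₃ * m₃⁻¹ * m₂⁻¹) * (d₁₂ * m₂⁻¹ * m₁⁻¹)) ^ 4 =
      (d₃₄ * d₂₃ * d₁₂) ^ 4 * (m₁ ^ 6)⁻¹ * (m₂ ^ 6)⁻¹ * (m₃ ^ 6)⁻¹ * (m₄ ^ 6)⁻¹ := by
  have e1 := push_inv (G := G) hd12a
  have e2 := push_inv (G := G) hd12b
  have e3 := push_inv (G := G) hd12c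
  have e4 := push_inv (G := G) hd12d
  have f1 := push_inv (G := G) hd23a
  have f2 := push_inv (G := G) hd23b
  have f3 := push_inv (G := G) hd23c
  have f4 := push_inv (G := G) hd23d
  have g1 := push_inv (G := G) hd34a
  have g2 := push_inv (G := G) hd34b
  have g3 := push_inv (G := G) hd34c
  have g4 := push_inv (G := G) hd34d
  have c12 := comm_inv (G := G) h12
  have c13 := comm_inv (G := G) h13
  have c14 := comm_inv (G := G) h14
  have c23 := comm_inv (G := G) h23
  have c24 := comm_inv (G := G) h24
  have c34 := comm_inv (G := G) h34
  simp only [pow_succ, pow_zero, one_mul, mul_inv_rev, mul_assoc,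
    e1, e2, e3, e4, f1, f2, f3, f4, g1, g2, g3, g4, c12, c13, c14, c23, c24, c34,
    push_inv' hd12a, push_inv' hd12b, push_inv' hd12c, push_inv' hd12d,
    push_inv' hd23a, push_inv' hd23b, push_inv' hd23c, push_inv' hd23d,
    push_inv' hd34a, push_inv' hd34b, push_inv' hd34c, push_inv' hd34d,
    comm_inv' h12, comm_inv' h13, comm_inv' h14, comm_inv' h23, comm_inv' h24, comm_inv' h34]
end

section
/- Let G be a group and let d₁₂, d₂₃, d₃₄, m₁, m₂, m₃, m₄, z ∈ G be such that m₁, m₂, m₃, m₄ commute pairwise and, for each pair (i,j) ∈ {(1,2),(2,3),(3,4)}: d_{ij}*m_i = m_j*d_{ij}, d_{ij}*m_j = m_i*d_{ij}, and d_{ij}*m_k = m_k*d_{ij} for every k ∈ {1,2,3,4} with k ∉ {i,j}. Assume moreover that (d₃₄*d₂₃*d₁₂)^4 = z*m₄²*m₃²*m₂²*m₁². Set r_{ij} = d_{ij}*m_j⁻¹*m_i⁻¹. Then (r₃₄*r₂₃*r₁₂)^4 = z*m₄⁻⁴*m₃⁻⁴*m₂⁻⁴*m₁⁻⁴. -/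
set_option maxHeartbeats 2000000 in
/-- Group-theoretic form of Lemma 4.1: if `(d₃₄ d₂₃ d₁₂)⁴ = z m₄² m₃² m₂² m₁²`,
then the swap maps `rᵢⱼ = dᵢⱼ mⱼ⁻¹ mᵢ⁻¹` satisfy
`(r₃₄ r₂₃ r₁₂)⁴ = z m₄⁻⁴ m₃⁻⁴ m₂⁻⁴ m₁⁻⁴`. -/
theorem swaps_fourth_power_boundary {G : Type*} [Group G]
    (d₁₂ d₂₃ d₃₄ m₁ m₂ m₃ m₄ z : G)
    (h12 : m₁ * m₂ = m₂ * m₁) (h13 : m₁ * m₃ = m₃ * m₁) (h14 : m₁ * m₄ = m₄ * m₁)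
    (h23 : m₂ * m₃ = m₃ * m₂) (h24 : m₂ * m₄ = m₄ * m₂) (h34 : m₃ * m₄ = m₄ * m₃)
    (hd12a : d₁₂ * m₁ = m₂ * d₁₂) (hd12b : d₁₂ * m₂ = m₁ * d₁₂)
    (hd12c : d₁₂ * m₃ = m₃ * d₁₂) (hd12d : d₁₂ * m₄ = m₄ * d₁₂)
    (hd23a : d₂₃ * m₂ = m₃ * d₂₃) (hd23b : d₂₃ * m₃ = m₂ * d₂₃)
    (hd23c : d₂₃ * m₁ = m₁ * d₂₃) (hd23d : d₂₃ * m₄ = m₄ * d₂₃)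
    (hd34a : d₃₄ * m₃ = m₄ * d₃₄) (hd34b : d₃₄ * m₄ = m₃ * d₃₄)
    (hd34c : d₃₄ * m₁ = m₁ * d₃₄) (hd34d : d₃₄ * m₂ = m₂ * d₃₄)
    (hz : (d₃₄ * d₂₃ * d₁₂) ^ 4 = z * m₄ ^ 2 * m₃ ^ 2 * m₂ ^ 2 * m₁ ^ 2) :
    ((d₃₄ * m₄⁻¹ * m₃⁻¹) * (d₂₃ * m₃⁻¹ * m₂⁻¹) * (d₁₂ * m₂⁻¹ * m₁⁻¹)) ^ 4 =
      z * (m₄ ^ 4)⁻¹ * (m₃ ^ 4)⁻¹ * (m₂ ^ 4)⁻¹ * (m₁ ^ 4)⁻¹ := by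
  have K12 : Commute m₁ m₂ := h12
  have K13 : Commute m₁ m₃ := h13
  have K14 : Commute m₁ m₄ := h14
  have K23 : Commute m₂ m₃ := h23
  have K24 : Commute m₂ m₄ := h24
  have K34 : Commute m₃ m₄ := h34
  have sw1 : ∀ x : G, m₂ * (m₁ * x) = m₁ * (m₂ * x) := fun x => by
    rw [← mul_assoc, ← (K12).eq, mul_assoc]
  have sw2 : m₂ * m₁ = m₁ * m₂ := (K12).eq.symm
  have sw3 : ∀ x : G, m₂⁻¹ * (m₁ * x) = m₁ * (m₂⁻¹ * x) := fun x => by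
    rw [← mul_assoc, ← (K12.inv_right).eq, mul_assoc]
  have sw4 : m₂⁻¹ * m₁ = m₁ * m₂⁻¹ := (K12.inv_right).eq.symm
  have sw5 : ∀ x : G, m₃ * (m₁ * x) = m₁ * (m₃ * x) := fun x => by
    rw [← mul_assoc, ← (K13).eq, mul_assoc]
  have sw6 : m₃ * m₁ = m₁ * m₃ := (K13).eq.symm
  have sw7 : ∀ x : G, m₃⁻¹ * (m₁ * x) = m₁ * (m₃⁻¹ * x) := fun x => by
    rw [← mul_assoc, ← (K13.inv_right).eq, mul_assoc]
  have sw8 : m₃⁻¹ * m₁ = m₁ * m₃⁻¹ := (K13.inv_right).eq.symm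
  have sw9 : ∀ x : G, m₄ * (m₁ * x) = m₁ * (m₄ * x) := fun x => by
    rw [← mul_assoc, ← (K14).eq, mul_assoc]
  have sw10 : m₄ * m₁ = m₁ * m₄ := (K14).eq.symm
  have sw11 : ∀ x : G, m₄⁻¹ * (m₁ * x) = m₁ * (m₄⁻¹ * x) := fun x => by
    rw [← mul_assoc, ← (K14.inv_right).eq, mul_assoc]
  have sw12 : m₄⁻¹ * m₁ = m₁ * m₄⁻¹ := (K14.inv_right).eq.symm
  have sw13 : ∀ x : G, m₂ * (m₁⁻¹ * x) = m₁⁻¹ * (m₂ * x) := fun x => by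
    rw [← mul_assoc, ← (K12.inv_left).eq, mul_assoc]
  have sw14 : m₂ * m₁⁻¹ = m₁⁻¹ * m₂ := (K12.inv_left).eq.symm
  have sw15 : ∀ x : G, m₂⁻¹ * (m₁⁻¹ * x) = m₁⁻¹ * (m₂⁻¹ * x) := fun x => by
    rw [← mul_assoc, ← (K12.inv_left.inv_right).eq, mul_assoc]
  have sw16 : m₂⁻¹ * m₁⁻¹ = m₁⁻¹ * m₂⁻¹ := (K12.inv_left.inv_right).eq.symm
  have sw17 : ∀ x : G, m₃ * (m₁⁻¹ * x) = m₁⁻¹ * (m₃ * x) := fun x => by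
    rw [← mul_assoc, ← (K13.inv_left).eq, mul_assoc]
  have sw18 : m₃ * m₁⁻¹ = m₁⁻¹ * m₃ := (K13.inv_left).eq.symm
  have sw19 : ∀ x : G, m₃⁻¹ * (m₁⁻¹ * x) = m₁⁻¹ * (m₃⁻¹ * x) := fun x => by
    rw [← mul_assoc, ← (K13.inv_left.inv_right).eq, mul_assoc]
  have sw20 : m₃⁻¹ * m₁⁻¹ = m₁⁻¹ * m₃⁻¹ := (K13.inv_left.inv_right).eq.symm
  have sw21 : ∀ x : G, m₄ * (m₁⁻¹ * x) = m₁⁻¹ * (m₄ * x) := fun x => by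
    rw [← mul_assoc, ← (K14.inv_left).eq, mul_assoc]
  have sw22 : m₄ * m₁⁻¹ = m₁⁻¹ * m₄ := (K14.inv_left).eq.symm
  have sw23 : ∀ x : G, m₄⁻¹ * (m₁⁻¹ * x) = m₁⁻¹ * (m₄⁻¹ * x) := fun x => by
    rw [← mul_assoc, ← (K14.inv_left.inv_right).eq, mul_assoc]
  have sw24 : m₄⁻¹ * m₁⁻¹ = m₁⁻¹ * m₄⁻¹ := (K14.inv_left.inv_right).eq.symm
  have sw25 : ∀ x : G, m₃ * (m₂ * x) = m₂ * (m₃ * x) := fun x => by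
    rw [← mul_assoc, ← (K23).eq, mul_assoc]
  have sw26 : m₃ * m₂ = m₂ * m₃ := (K23).eq.symm
  have sw27 : ∀ x : G, m₃⁻¹ * (m₂ * x) = m₂ * (m₃⁻¹ * x) := fun x => by
    rw [← mul_assoc, ← (K23.inv_right).eq, mul_assoc]
  have sw28 : m₃⁻¹ * m₂ = m₂ * m₃⁻¹ := (K23.inv_right).eq.symm
  have sw29 : ∀ x : G, m₄ * (m₂ * x) = m₂ * (m₄ * x) := fun x => by
    rw [← mul_assoc, ← (K24).eq, mul_assoc]
  have sw30 : m₄ * m₂ = m₂ * m₄ := (K24).eq.symm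
  have sw31 : ∀ x : G, m₄⁻¹ * (m₂ * x) = m₂ * (m₄⁻¹ * x) := fun x => by
    rw [← mul_assoc, ← (K24.inv_right).eq, mul_assoc]
  have sw32 : m₄⁻¹ * m₂ = m₂ * m₄⁻¹ := (K24.inv_right).eq.symm
  have sw33 : ∀ x : G, m₃ * (m₂⁻¹ * x) = m₂⁻¹ * (m₃ * x) := fun x => by
    rw [← mul_assoc, ← (K23.inv_left).eq, mul_assoc]
  have sw34 : m₃ * m₂⁻¹ = m₂⁻¹ * m₃ := (K23.inv_left).eq.symm
  have sw35 : ∀ x : G, m₃⁻¹ * (m₂⁻¹ * x) = m₂⁻¹ * (m₃⁻¹ * x) := fun x => by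
    rw [← mul_assoc, ← (K23.inv_left.inv_right).eq, mul_assoc]
  have sw36 : m₃⁻¹ * m₂⁻¹ = m₂⁻¹ * m₃⁻¹ := (K23.inv_left.inv_right).eq.symm
  have sw37 : ∀ x : G, m₄ * (m₂⁻¹ * x) = m₂⁻¹ * (m₄ * x) := fun x => by
    rw [← mul_assoc, ← (K24.inv_left).eq, mul_assoc]
  have sw38 : m₄ * m₂⁻¹ = m₂⁻¹ * m₄ := (K24.inv_left).eq.symm
  have sw39 : ∀ x : G, m₄⁻¹ * (m₂⁻¹ * x) = m₂⁻¹ * (m₄⁻¹ * x) := fun x => by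
    rw [← mul_assoc, ← (K24.inv_left.inv_right).eq, mul_assoc]
  have sw40 : m₄⁻¹ * m₂⁻¹ = m₂⁻¹ * m₄⁻¹ := (K24.inv_left.inv_right).eq.symm
  have sw41 : ∀ x : G, m₄ * (m₃ * x) = m₃ * (m₄ * x) := fun x => by
    rw [← mul_assoc, ← (K34).eq, mul_assoc]
  have sw42 : m₄ * m₃ = m₃ * m₄ := (K34).eq.symm
  have sw43 : ∀ x : G, m₄⁻¹ * (m₃ * x) = m₃ * (m₄⁻¹ * x) := fun x => by
    rw [← mul_assoc, ← (K34.inv_right).eq, mul_assoc]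
  have sw44 : m₄⁻¹ * m₃ = m₃ * m₄⁻¹ := (K34.inv_right).eq.symm
  have sw45 : ∀ x : G, m₄ * (m₃⁻¹ * x) = m₃⁻¹ * (m₄ * x) := fun x => by
    rw [← mul_assoc, ← (K34.inv_left).eq, mul_assoc]
  have sw46 : m₄ * m₃⁻¹ = m₃⁻¹ * m₄ := (K34.inv_left).eq.symm
  have sw47 : ∀ x : G, m₄⁻¹ * (m₃⁻¹ * x) = m₃⁻¹ * (m₄⁻¹ * x) := fun x => by
    rw [← mul_assoc, ← (K34.inv_left.inv_right).eq, mul_assoc]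
  have sw48 : m₄⁻¹ * m₃⁻¹ = m₃⁻¹ * m₄⁻¹ := (K34.inv_left.inv_right).eq.symm
  have dw49 : ∀ x : G, m₂⁻¹ * (d₁₂ * x) = d₁₂ * (m₁⁻¹ * x) := fun x => by
    rw [← mul_assoc, ← mul_assoc]
    congr 1
    rw [inv_mul_eq_iff_eq_mul, ← mul_assoc, ← hd12a, mul_assoc, mul_inv_cancel, mul_one]
  have dw50 : m₂⁻¹ * d₁₂ = d₁₂ * m₁⁻¹ := by
    rw [inv_mul_eq_iff_eq_mul, ← mul_assoc, ← hd12a, mul_assoc, mul_inv_cancel, mul_one]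
  have dw51 : ∀ x : G, m₁⁻¹ * (d₁₂ * x) = d₁₂ * (m₂⁻¹ * x) := fun x => by
    rw [← mul_assoc, ← mul_assoc]
    congr 1
    rw [inv_mul_eq_iff_eq_mul, ← mul_assoc, ← hd12b, mul_assoc, mul_inv_cancel, mul_one]
  have dw52 : m₁⁻¹ * d₁₂ = d₁₂ * m₂⁻¹ := by
    rw [inv_mul_eq_iff_eq_mul, ← mul_assoc, ← hd12b, mul_assoc, mul_inv_cancel, mul_one]
  have dw53 : ∀ x : G, m₃⁻¹ * (d₁₂ * x) = d₁₂ * (m₃⁻¹ * x) := fun x => by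
    rw [← mul_assoc, ← mul_assoc]
    congr 1
    rw [inv_mul_eq_iff_eq_mul, ← mul_assoc, ← hd12c, mul_assoc, mul_inv_cancel, mul_one]
  have dw54 : m₃⁻¹ * d₁₂ = d₁₂ * m₃⁻¹ := by
    rw [inv_mul_eq_iff_eq_mul, ← mul_assoc, ← hd12c, mul_assoc, mul_inv_cancel, mul_one]
  have dw55 : ∀ x : G, m₄⁻¹ * (d₁₂ * x) = d₁₂ * (m₄⁻¹ * x) := fun x => by
    rw [← mul_assoc, ← mul_assoc]
    congr 1
    rw [inv_mul_eq_iff_eq_mul, ← mul_assoc, ← hd12d, mul_assoc, mul_inv_cancel, mul_one]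
  have dw56 : m₄⁻¹ * d₁₂ = d₁₂ * m₄⁻¹ := by
    rw [inv_mul_eq_iff_eq_mul, ← mul_assoc, ← hd12d, mul_assoc, mul_inv_cancel, mul_one]
  have dw57 : ∀ x : G, m₃⁻¹ * (d₂₃ * x) = d₂₃ * (m₂⁻¹ * x) := fun x => by
    rw [← mul_assoc, ← mul_assoc]
    congr 1
    rw [inv_mul_eq_iff_eq_mul, ← mul_assoc, ← hd23a, mul_assoc, mul_inv_cancel, mul_one]
  have dw58 : m₃⁻¹ * d₂₃ = d₂₃ * m₂⁻¹ := by
    rw [inv_mul_eq_iff_eq_mul, ← mul_assoc, ← hd23a, mul_assoc, mul_inv_cancel, mul_one]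
  have dw59 : ∀ x : G, m₂⁻¹ * (d₂₃ * x) = d₂₃ * (m₃⁻¹ * x) := fun x => by
    rw [← mul_assoc, ← mul_assoc]
    congr 1
    rw [inv_mul_eq_iff_eq_mul, ← mul_assoc, ← hd23b, mul_assoc, mul_inv_cancel, mul_one]
  have dw60 : m₂⁻¹ * d₂₃ = d₂₃ * m₃⁻¹ := by
    rw [inv_mul_eq_iff_eq_mul, ← mul_assoc, ← hd23b, mul_assoc, mul_inv_cancel, mul_one]
  have dw61 : ∀ x : G, m₁⁻¹ * (d₂₃ * x) = d₂₃ * (m₁⁻¹ * x) := fun x => by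
    rw [← mul_assoc, ← mul_assoc]
    congr 1
    rw [inv_mul_eq_iff_eq_mul, ← mul_assoc, ← hd23c, mul_assoc, mul_inv_cancel, mul_one]
  have dw62 : m₁⁻¹ * d₂₃ = d₂₃ * m₁⁻¹ := by
    rw [inv_mul_eq_iff_eq_mul, ← mul_assoc, ← hd23c, mul_assoc, mul_inv_cancel, mul_one]
  have dw63 : ∀ x : G, m₄⁻¹ * (d₂₃ * x) = d₂₃ * (m₄⁻¹ * x) := fun x => by
    rw [← mul_assoc, ← mul_assoc]
    congr 1
    rw [inv_mul_eq_iff_eq_mul, ← mul_assoc, ← hd23d, mul_assoc, mul_inv_cancel, mul_one]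
  have dw64 : m₄⁻¹ * d₂₃ = d₂₃ * m₄⁻¹ := by
    rw [inv_mul_eq_iff_eq_mul, ← mul_assoc, ← hd23d, mul_assoc, mul_inv_cancel, mul_one]
  have dw65 : ∀ x : G, m₄⁻¹ * (d₃₄ * x) = d₃₄ * (m₃⁻¹ * x) := fun x => by
    rw [← mul_assoc, ← mul_assoc]
    congr 1
    rw [inv_mul_eq_iff_eq_mul, ← mul_assoc, ← hd34a, mul_assoc, mul_inv_cancel, mul_one]
  have dw66 : m₄⁻¹ * d₃₄ = d₃₄ * m₃⁻¹ := by
    rw [inv_mul_eq_iff_eq_mul, ← mul_assoc, ← hd34a, mul_assoc, mul_inv_cancel, mul_one]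
  have dw67 : ∀ x : G, m₃⁻¹ * (d₃₄ * x) = d₃₄ * (m₄⁻¹ * x) := fun x => by
    rw [← mul_assoc, ← mul_assoc]
    congr 1
    rw [inv_mul_eq_iff_eq_mul, ← mul_assoc, ← hd34b, mul_assoc, mul_inv_cancel, mul_one]
  have dw68 : m₃⁻¹ * d₃₄ = d₃₄ * m₄⁻¹ := by
    rw [inv_mul_eq_iff_eq_mul, ← mul_assoc, ← hd34b, mul_assoc, mul_inv_cancel, mul_one]
  have dw69 : ∀ x : G, m₁⁻¹ * (d₃₄ * x) = d₃₄ * (m₁⁻¹ * x) := fun x => by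
    rw [← mul_assoc, ← mul_assoc]
    congr 1
    rw [inv_mul_eq_iff_eq_mul, ← mul_assoc, ← hd34c, mul_assoc, mul_inv_cancel, mul_one]
  have dw70 : m₁⁻¹ * d₃₄ = d₃₄ * m₁⁻¹ := by
    rw [inv_mul_eq_iff_eq_mul, ← mul_assoc, ← hd34c, mul_assoc, mul_inv_cancel, mul_one]
  have dw71 : ∀ x : G, m₂⁻¹ * (d₃₄ * x) = d₃₄ * (m₂⁻¹ * x) := fun x => by
    rw [← mul_assoc, ← mul_assoc]
    congr 1
    rw [inv_mul_eq_iff_eq_mul, ← mul_assoc, ← hd34d, mul_assoc, mul_inv_cancel, mul_one]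
  have dw72 : m₂⁻¹ * d₃₄ = d₃₄ * m₂⁻¹ := by
    rw [inv_mul_eq_iff_eq_mul, ← mul_assoc, ← hd34d, mul_assoc, mul_inv_cancel, mul_one]
  have expand : ((d₃₄ * m₄⁻¹ * m₃⁻¹) * (d₂₃ * m₃⁻¹ * m₂⁻¹) * (d₁₂ * m₂⁻¹ * m₁⁻¹)) ^ 4 =
      (d₃₄ * d₂₃ * d₁₂) ^ 4 *
        (m₁⁻¹ ^ 6 * m₂⁻¹ ^ 6 * m₃⁻¹ ^ 6 * m₄⁻¹ ^ 6) := by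
    simp only [pow_succ, pow_zero, one_mul, mul_assoc]
    simp only [mul_inv_rev, sw1, sw2, sw3, sw4, sw5, sw6, sw7, sw8, sw9, sw10, sw11, sw12, sw13, sw14, sw15, sw16, sw17, sw18, sw19, sw20, sw21, sw22, sw23, sw24, sw25, sw26, sw27, sw28, sw29, sw30, sw31, sw32, sw33, sw34, sw35, sw36, sw37, sw38, sw39, sw40, sw41, sw42, sw43, sw44, sw45, sw46, sw47, sw48, dw49, dw50, dw51, dw52, dw53, dw54, dw55, dw56, dw57, dw58, dw59, dw60, dw61, dw62, dw63, dw64, dw65, dw66, dw67, dw68, dw69, dw70, dw71, dw72]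
  rw [expand, hz]
  simp only [inv_pow, pow_succ, pow_zero, one_mul, mul_assoc]
  simp only [mul_inv_rev, mul_assoc, sw1, sw2, sw3, sw4, sw5, sw6, sw7, sw8, sw9, sw10, sw11, sw12, sw13, sw14, sw15, sw16, sw17, sw18, sw19, sw20, sw21, sw22, sw23, sw24, sw25, sw26, sw27, sw28, sw29, sw30, sw31, sw32, sw33, sw34, sw35, sw36, sw37, sw38, sw39, sw40, sw41, sw42, sw43, sw44, sw45, sw46, sw47, sw48, dw49, dw50, dw51, dw52, dw53, dw54, dw55, dw56, dw57, dw58, dw59, dw60, dw61, dw62, dw63, dw64, dw65, dw66, dw67, dw68, dw69, dw70, dw71, dw72, mul_inv_cancel_left, inv_mul_cancel_left, mul_inv_cancel,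
    inv_mul_cancel, mul_one]
end

section
/- Let g' ≥ 0 and set k = 2g' + 2 and n = 2k = 4g' + 4. In the braid group B_n, let Δ_n = (σ₁σ₂⋯σ_{n−1})(σ₁⋯σ_{n−2})⋯(σ₁σ₂)(σ₁) be the Garside half-twist, let T₁ = (σ₁σ₂⋯σ_{k−1})^k be the full twist on the first k strands, and let T₂ = (σ_{k+1}σ_{k+2}⋯σ_{n−1})^k be the full twist on the last k strands. Then the element Δ_n * T₁⁻¹ * T₂⁻¹ is quasipositive: it can be written as a product of k elements of B_n, each of which is conjugate in B_n to one of the standard generators σ_i. -/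
/-- The braid relations on generators `σ₁, …, σ_m` (indexed by `Fin m`):
far-apart generators commute, and adjacent generators satisfy the braid relation.
The corresponding presented group is the braid group on `m + 1` strands. -/
def braidRels (m : ℕ) : Set (FreeGroup (Fin m)) :=
  { r | (∃ i j : Fin m, (i : ℕ) + 2 ≤ (j : ℕ) ∧
          r = FreeGroup.of i * FreeGroup.of j * (FreeGroup.of i)⁻¹ * (FreeGroup.of j)⁻¹) ∨
        (∃ i j : Fin m, (j : ℕ) = (i : ℕ) + 1 ∧
          r = FreeGroup.of i * FreeGroup.of j * FreeGroup.of i *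
              (FreeGroup.of j * FreeGroup.of i * FreeGroup.of j)⁻¹) }

/-- The braid group `B_n` on `n` strands, presented with generators
`σ₁, …, σ_{n-1}` (indexed by `Fin (n-1)`) and the braid relations. -/
abbrev BraidGroup (n : ℕ) := PresentedGroup (braidRels (n - 1))

/-- The standard generator `σ_{i+1}` of `B_n` (so `braidGen n 0 = σ₁`, etc.);
equal to `1` for out-of-range indices. -/
def braidGen (n : ℕ) (i : ℕ) : BraidGroup n :=
  if h : i < n - 1 then PresentedGroup.of (⟨i, h⟩ : Fin (n - 1)) else 1

/-- The partial chain `σ₁ σ₂ ⋯ σ_l` in `B_n`. -/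
def braidChain (n : ℕ) (l : ℕ) : BraidGroup n :=
  ((List.range l).map (braidGen n)).prod

/-- The Garside half-twist
`Δ_n = (σ₁ σ₂ ⋯ σ_{n-1})(σ₁ ⋯ σ_{n-2}) ⋯ (σ₁ σ₂)(σ₁)` in `B_n`. -/
def garside (n : ℕ) : BraidGroup n :=
  ((List.range (n - 1)).map fun j => braidChain n (n - 1 - j)).prod

/-!
Write `σ_t` for `braidGen n t`, `D(s, m)` for `Δ · T₁⁻¹ · T₂⁻¹` on the `2m` strands starting at `s`,
and `Δ'` for a half twist on the strands strictly inside a block. Removing the outermost strand of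
each half gives `Δ_{2m+2} = Δ'_{2m} · M` with `M = (σ_s ⋯ σ_{s+2m})(σ_{s+2m-1} ⋯ σ_s)`, and it
factors the full twist of each half as two chains times the full twist of the smaller half, e.g.
`Δ_{m+1}² = (σ_s ⋯ σ_{s+m-1})(σ_{s+m-1} ⋯ σ_s) · Δ'_m²`. The braid `M` commutes with every braid
on the inner strands, and it is `w σ_{s+m} w⁻¹` times the chain factors of the two full twists,
where `w = (σ_s ⋯ σ_{s+m-1})(σ_{s+2m} ⋯ σ_{s+m+1})`. Hence `D(s, m+1) = D(s+1, m) · w σ_{s+m} w⁻¹`,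
and by induction `D(0, k)` is a product of `k` conjugates of the middle generator.
-/

namespace BraidGroup

variable {n : ℕ}

theorem braidGen_eq_of {i : ℕ} (h : i < n - 1) : braidGen n i = PresentedGroup.of ⟨i, h⟩ :=
  dif_pos h

theorem commute_braidGen {i j : ℕ} (h : i + 2 ≤ j) : Commute (braidGen n i) (braidGen n j) := by
  by_cases hj : j < n - 1
  · rw [braidGen_eq_of (by omega : i < n - 1), braidGen_eq_of hj,
      ← commutatorElement_eq_one_iff_commute]
    exact PresentedGroup.one_of_mem (Or.inl ⟨_, _, h, rfl⟩)
  · rw [show braidGen n j = 1 from dif_neg hj]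
    exact Commute.one_right _

theorem braidGen_braid {i : ℕ} (h : i + 3 ≤ n) :
    braidGen n i * braidGen n (i + 1) * braidGen n i =
      braidGen n (i + 1) * braidGen n i * braidGen n (i + 1) := by
  rw [braidGen_eq_of (by omega : i < n - 1), braidGen_eq_of (by omega : i + 1 < n - 1)]
  exact eq_of_mul_inv_eq_one (PresentedGroup.one_of_mem (Or.inr ⟨_, _, rfl, rfl⟩))

def parabolic (n a b : ℕ) : Subgroup (BraidGroup n) :=
  Subgroup.closure (braidGen n '' Set.Ico a b)

theorem braidGen_mem_parabolic {a b t : ℕ} (ha : a ≤ t) (hb : t < b) :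
    braidGen n t ∈ parabolic n a b :=
  Subgroup.subset_closure ⟨t, ⟨ha, hb⟩, rfl⟩

theorem commute_of_forall_commute_braidGen {a b : ℕ} {x y : BraidGroup n}
    (h : ∀ t, a ≤ t → t < b → Commute x (braidGen n t)) (hy : y ∈ parabolic n a b) :
    Commute x y := by
  have hx : x ∈ Subgroup.centralizer (parabolic n a b) := by
    rw [parabolic, Subgroup.centralizer_closure]
    rintro _ ⟨t, ⟨ha, hb⟩, rfl⟩
    exact (h t ha hb).symm
  exact (hx y hy).symm

theorem commute_of_mem_parabolic {a b a' b' : ℕ} {x y : BraidGroup n} (h : b + 1 ≤ a')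
    (hx : x ∈ parabolic n a b) (hy : y ∈ parabolic n a' b') : Commute x y :=
  (commute_of_forall_commute_braidGen (fun _ _ hb =>
    (commute_of_forall_commute_braidGen (fun _ ha' _ => commute_braidGen (by omega)) hy).symm)
    hx).symm

def chain (n s l : ℕ) : BraidGroup n :=
  ((List.range l).map fun i => braidGen n (s + i)).prod

def revChain (n s : ℕ) : ℕ → BraidGroup n
  | 0 => 1
  | l + 1 => braidGen n (s + l) * revChain n s l

/-- The half twist on the `m` consecutive strands starting at strand `s` (counted from `0`). -/
def halfTwist (n s : ℕ) : ℕ → BraidGroup n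
  | 0 => 1
  | m + 1 => chain n s m * halfTwist n s m

@[simp] theorem chain_zero (s : ℕ) : chain n s 0 = 1 := rfl

theorem chain_succ (s l : ℕ) : chain n s (l + 1) = chain n s l * braidGen n (s + l) := by
  simp [chain, List.range_succ]

@[simp] theorem revChain_zero (s : ℕ) : revChain n s 0 = 1 := rfl

theorem revChain_succ (s l : ℕ) : revChain n s (l + 1) = braidGen n (s + l) * revChain n s l :=
  rfl

@[simp] theorem halfTwist_zero (s : ℕ) : halfTwist n s 0 = 1 := rfl

@[simp] theorem halfTwist_one (s : ℕ) : halfTwist n s 1 = 1 := mul_one _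

theorem halfTwist_succ (s m : ℕ) : halfTwist n s (m + 1) = chain n s m * halfTwist n s m := rfl

theorem chain_add (s a b : ℕ) : chain n s (a + b) = chain n s a * chain n (s + a) b := by
  induction b with
  | zero => simp
  | succ b ih => rw [← add_assoc, chain_succ, ih, chain_succ, mul_assoc, add_assoc]

theorem revChain_add (s a b : ℕ) :
    revChain n s (a + b) = revChain n (s + a) b * revChain n s a := by
  induction b with
  | zero => simp
  | succ b ih => rw [← add_assoc, revChain_succ, ih, revChain_succ, mul_assoc, add_assoc]

theorem revChain_succ' (s l : ℕ) :
    revChain n s (l + 1) = revChain n (s + 1) l * braidGen n s := by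
  rw [add_comm, revChain_add]
  simp [revChain_succ]

theorem chain_mem_parabolic {a b s l : ℕ} (ha : a ≤ s) (hb : s + l ≤ b) :
    chain n s l ∈ parabolic n a b := by
  induction l with
  | zero => exact one_mem _
  | succ l ih =>
    rw [chain_succ]
    exact mul_mem (ih (by omega)) (braidGen_mem_parabolic (by omega) (by omega))

theorem revChain_mem_parabolic {a b s l : ℕ} (ha : a ≤ s) (hb : s + l ≤ b) :
    revChain n s l ∈ parabolic n a b := by
  induction l with
  | zero => exact one_mem _
  | succ l ih => exact mul_mem (braidGen_mem_parabolic (by omega) (by omega)) (ih (by omega))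

theorem halfTwist_mem_parabolic {a b s m : ℕ} (ha : a ≤ s) (hb : s + m ≤ b + 1) :
    halfTwist n s m ∈ parabolic n a b := by
  induction m with
  | zero => exact one_mem _
  | succ m ih => exact mul_mem (chain_mem_parabolic ha (by omega)) (ih (by omega))

theorem chain_mul_braidGen {s l i : ℕ} (hi : i + 2 ≤ l) (hn : s + l + 1 ≤ n) :
    chain n s l * braidGen n (s + i) = braidGen n (s + i + 1) * chain n s l := by
  obtain ⟨m, rfl⟩ : ∃ m, l = i + 2 + m := ⟨l - (i + 2), by omega⟩
  have hleft : Commute (braidGen n (s + i + 1)) (chain n s i) :=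
    commute_of_mem_parabolic (a := s) (b := s + i) (by omega) (chain_mem_parabolic le_rfl le_rfl)
      (braidGen_mem_parabolic le_rfl (Nat.lt_succ_self _)) |>.symm
  have hright : Commute (braidGen n (s + i)) (chain n (s + (i + 2)) m) :=
    commute_of_mem_parabolic (b := s + i + 1) (by omega)
      (braidGen_mem_parabolic le_rfl (by omega)) (chain_mem_parabolic le_rfl le_rfl)
  rw [chain_add, chain_succ, chain_succ, mul_assoc, ← hright.eq, ← add_assoc]
  calc chain n s i * braidGen n (s + i) * braidGen n (s + i + 1) *
        (braidGen n (s + i) * chain n (s + i + 2) m)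
      = chain n s i * (braidGen n (s + i) * braidGen n (s + i + 1) * braidGen n (s + i)) *
          chain n (s + i + 2) m := by group
    _ = braidGen n (s + i + 1) * (chain n s i * braidGen n (s + i) * braidGen n (s + i + 1) *
          chain n (s + i + 2) m) := by
        rw [braidGen_braid (by omega), ← mul_assoc (chain n s i), ← mul_assoc (chain n s i),
          ← hleft.eq]
        group

theorem revChain_mul_braidGen {s l i : ℕ} (hi : i + 2 ≤ l) (hn : s + l + 1 ≤ n) :
    revChain n s l * braidGen n (s + i + 1) = braidGen n (s + i) * revChain n s l := by
  obtain ⟨m, rfl⟩ : ∃ m, l = i + 2 + m := ⟨l - (i + 2), by omega⟩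
  have hright : Commute (revChain n s i) (braidGen n (s + i + 1)) :=
    commute_of_mem_parabolic (b := s + i) (by omega) (revChain_mem_parabolic le_rfl le_rfl)
      (braidGen_mem_parabolic le_rfl (Nat.lt_succ_self _))
  have hleft : Commute (revChain n (s + i + 2) m) (braidGen n (s + i)) :=
    commute_of_mem_parabolic (b := s + i + 1) (by omega)
      (braidGen_mem_parabolic le_rfl (by omega)) (revChain_mem_parabolic le_rfl le_rfl) |>.symm
  rw [revChain_add, revChain_succ, revChain_succ]
  simp only [← add_assoc]
  calc revChain n (s + i + 2) m *
        (braidGen n (s + i + 1) * (braidGen n (s + i) * revChain n s i)) * braidGen n (s + i + 1)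
      = revChain n (s + i + 2) m *
          (braidGen n (s + i + 1) * braidGen n (s + i) * braidGen n (s + i + 1)) *
          revChain n s i := by
        rw [mul_assoc (revChain n _ m), mul_assoc (braidGen n _), mul_assoc (braidGen n _),
          hright.eq]
        group
    _ = braidGen n (s + i) * (revChain n (s + i + 2) m *
          (braidGen n (s + i + 1) * (braidGen n (s + i) * revChain n s i))) := by
        rw [← braidGen_braid (by omega), ← mul_assoc (revChain n _ m),
          ← mul_assoc (revChain n _ m), hleft.eq]
        group

theorem chain_mul_chain {s L l : ℕ} (hl : l < L) (hn : s + L + 1 ≤ n) :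
    chain n s L * chain n s l = chain n (s + 1) l * chain n s L := by
  induction l with
  | zero => simp
  | succ l ih =>
    rw [chain_succ, ← mul_assoc, ih (by omega), mul_assoc, chain_mul_braidGen (by omega) hn,
      chain_succ, ← mul_assoc, add_right_comm]

theorem chain_mul_halfTwist {s L m : ℕ} (hm : m ≤ L) (hn : s + L + 1 ≤ n) :
    chain n s L * halfTwist n s m = halfTwist n (s + 1) m * chain n s L := by
  induction m with
  | zero => simp
  | succ m ih =>
    rw [halfTwist_succ, ← mul_assoc, chain_mul_chain (by omega) hn, mul_assoc, ih (by omega),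
      halfTwist_succ, mul_assoc]

theorem halfTwist_succ_eq_halfTwist_mul_chain {s m : ℕ} (hn : s + m + 1 ≤ n) :
    halfTwist n s (m + 1) = halfTwist n (s + 1) m * chain n s m :=
  chain_mul_halfTwist le_rfl hn

theorem halfTwist_succ_eq_halfTwist_mul_revChain {s m : ℕ} (hn : s + m + 1 ≤ n) :
    halfTwist n s (m + 1) = halfTwist n s m * revChain n s m := by
  induction m with
  | zero => simp [halfTwist_succ]
  | succ m ih =>
    have hcomm : Commute (braidGen n (s + m)) (halfTwist n s m) :=
      commute_of_forall_commute_braidGen (fun _ _ ht => (commute_braidGen (by omega)).symm)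
        (halfTwist_mem_parabolic (b := s + m - 1) le_rfl (by omega))
    calc halfTwist n s (m + 2)
        = chain n s m * braidGen n (s + m) * (halfTwist n s m * revChain n s m) := by
          rw [halfTwist_succ, ih (by omega), chain_succ]
      _ = chain n s m * halfTwist n s m * (braidGen n (s + m) * revChain n s m) := by
          rw [mul_assoc (chain n s m), ← mul_assoc (braidGen n _), hcomm.eq]
          group
      _ = halfTwist n s (m + 1) * revChain n s (m + 1) := rfl

theorem chain_succ_mul_revChain {s l : ℕ} (hn : s + l + 2 ≤ n) :
    chain n s (l + 1) * revChain n s l = revChain n s (l + 1) * chain n (s + 1) l := by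
  induction l with
  | zero => simp [chain_succ, revChain_succ]
  | succ l ih =>
    have hcomm : Commute (braidGen n (s + l + 1)) (revChain n s l) :=
      commute_of_forall_commute_braidGen (fun _ _ ht => (commute_braidGen (by omega)).symm)
        (revChain_mem_parabolic le_rfl le_rfl)
    calc chain n s (l + 2) * revChain n s (l + 1)
        = chain n s (l + 2) * braidGen n (s + l) * revChain n s l := by
          rw [revChain_succ, mul_assoc]
      _ = braidGen n (s + l + 1) *
            (chain n s (l + 1) * braidGen n (s + l + 1) * revChain n s l) := by
          rw [chain_mul_braidGen (by omega) (by omega), chain_succ (l := l + 1), ← add_assoc]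
          group
      _ = braidGen n (s + l + 1) * (chain n s (l + 1) * revChain n s l) *
            braidGen n (s + l + 1) := by
          rw [mul_assoc (chain n s _), hcomm.eq]
          group
      _ = revChain n s (l + 2) * chain n (s + 1) (l + 1) := by
          rw [ih (by omega), revChain_succ (l := l + 1), chain_succ (s := s + 1), ← add_assoc,
            add_right_comm s 1 l]
          group

theorem halfTwist_succ_eq_revChain_mul_halfTwist {s m : ℕ} (hn : s + m + 1 ≤ n) :
    halfTwist n s (m + 1) = revChain n s m * halfTwist n (s + 1) m := by
  induction m with
  | zero => simp [halfTwist_succ]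
  | succ m ih =>
    rw [halfTwist_succ, ih (by omega), ← mul_assoc, chain_succ_mul_revChain (by omega), mul_assoc,
      ← halfTwist_succ]

theorem halfTwist_succ_sq {s m : ℕ} (hn : s + m + 1 ≤ n) :
    halfTwist n s (m + 1) ^ 2 = chain n s m * revChain n s m * halfTwist n (s + 1) m ^ 2 := by
  calc halfTwist n s (m + 1) ^ 2
      = chain n s m * (halfTwist n s m * revChain n s m) * halfTwist n (s + 1) m := by
        rw [sq]
        nth_rw 1 [halfTwist_succ]
        rw [halfTwist_succ_eq_revChain_mul_halfTwist hn]
        group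
    _ = chain n s m * revChain n s m * halfTwist n (s + 1) m ^ 2 := by
        rw [← halfTwist_succ_eq_halfTwist_mul_revChain hn,
          halfTwist_succ_eq_revChain_mul_halfTwist hn, sq]
        simp only [mul_assoc]

theorem halfTwist_succ_sq' {s m : ℕ} (hn : s + m + 1 ≤ n) :
    halfTwist n s (m + 1) ^ 2 = revChain n s m * chain n s m * halfTwist n s m ^ 2 := by
  calc halfTwist n s (m + 1) ^ 2
      = revChain n s m * (halfTwist n (s + 1) m * chain n s m) * halfTwist n s m := by
        rw [sq]
        nth_rw 1 [halfTwist_succ_eq_revChain_mul_halfTwist hn]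
        rw [halfTwist_succ]
        group
    _ = revChain n s m * chain n s m * halfTwist n s m ^ 2 := by
        rw [← halfTwist_succ_eq_halfTwist_mul_chain hn, halfTwist_succ, sq]
        simp only [mul_assoc]

/-- `halfTwist n s (m + j + 1) * (halfTwist n s (m + 1))⁻¹` is the product of the chains of
lengths `m + j, m + j - 1, …, m + 1` starting at `s`. -/
theorem chain_pow {s m j : ℕ} (hn : s + m + j + 1 ≤ n) :
    chain n s (m + j) ^ j =
      halfTwist n s (m + j + 1) * (halfTwist n s (m + 1))⁻¹ * halfTwist n (s + m + 1) j := by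
  induction j generalizing m with
  | zero => simp
  | succ j ih =>
    have hcomm : Commute (chain n s (m + 1)) (halfTwist n (s + (m + 1) + 1) j) :=
      commute_of_mem_parabolic le_rfl (chain_mem_parabolic le_rfl le_rfl)
        (halfTwist_mem_parabolic (b := s + m + j + 1) le_rfl (by omega))
    have hsplit : chain n s (m + 1 + j) = chain n s (m + 1) * chain n (s + m + 1) j := by
      rw [chain_add, ← add_assoc]
    rw [show m + (j + 1) = m + 1 + j by omega, pow_succ, ih (by omega), hsplit]
    calc halfTwist n s (m + 1 + j + 1) * (halfTwist n s (m + 1 + 1))⁻¹ *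
          halfTwist n (s + (m + 1) + 1) j * (chain n s (m + 1) * chain n (s + m + 1) j)
        = halfTwist n s (m + 1 + j + 1) * ((halfTwist n s (m + 1 + 1))⁻¹ * chain n s (m + 1)) *
            (halfTwist n (s + m + 1 + 1) j * chain n (s + m + 1) j) := by
          rw [mul_assoc _ (halfTwist n _ j), ← mul_assoc (halfTwist n _ j), ← hcomm.eq]
          group
      _ = halfTwist n s (m + 1 + j + 1) * (halfTwist n s (m + 1))⁻¹ *
            halfTwist n (s + m + 1) (j + 1) := by
          rw [halfTwist_succ_eq_halfTwist_mul_chain (s := s + m + 1) (by omega),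
            halfTwist_succ s (m + 1)]
          group

theorem chain_pow_succ_eq_halfTwist_sq {s L : ℕ} (hn : s + L + 1 ≤ n) :
    chain n s L ^ (L + 1) = halfTwist n s (L + 1) ^ 2 := by
  have h := chain_pow (s := s) (m := 0) (j := L) (by omega)
  simp only [zero_add, add_zero, halfTwist_one, inv_one, mul_one] at h
  rw [pow_succ, h, mul_assoc, ← halfTwist_succ_eq_halfTwist_mul_chain hn, sq]

theorem halfTwist_add_two {s l : ℕ} (hn : s + l + 2 ≤ n) :
    halfTwist n s (l + 2) = halfTwist n (s + 1) l * (chain n s (l + 1) * revChain n s l) := by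
  rw [halfTwist_succ, halfTwist_succ_eq_halfTwist_mul_revChain (by omega), ← mul_assoc,
    chain_mul_halfTwist (Nat.le_succ l) (by omega), mul_assoc]

theorem commute_chain_succ_mul_revChain {s l : ℕ} {x : BraidGroup n} (hn : s + l + 2 ≤ n)
    (hx : x ∈ parabolic n (s + 1) (s + l)) : Commute (chain n s (l + 1) * revChain n s l) x := by
  refine commute_of_forall_commute_braidGen (fun t ht ht' => ?_) hx
  obtain ⟨i, rfl⟩ : ∃ i, t = s + i + 1 := ⟨t - s - 1, by omega⟩
  change _ * _ = _ * _
  rw [mul_assoc, revChain_mul_braidGen (by omega) (by omega), ← mul_assoc,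
    chain_mul_braidGen (by omega) (by omega), mul_assoc]

theorem chain_add_add_one_mul_revChain {s a b : ℕ} (hn : s + a + b + 2 ≤ n) :
    chain n s (a + b + 1) * revChain n s (a + b) =
      chain n s a * revChain n (s + a + 1) b * braidGen n (s + a) * chain n (s + a + 1) b *
        revChain n s a := by
  rw [add_assoc, chain_add, revChain_add, mul_assoc, ← mul_assoc (chain n _ (b + 1)),
    chain_succ_mul_revChain (by omega), revChain_succ']
  group

theorem chain_add_add_one_mul_revChain_eq_conj_mul {s a b : ℕ} (hn : s + a + b + 2 ≤ n) :
    chain n s (a + b + 1) * revChain n s (a + b) =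
      chain n s a * revChain n (s + a + 1) b * braidGen n (s + a) *
        (chain n s a * revChain n (s + a + 1) b)⁻¹ *
        (revChain n (s + a + 1) b * chain n (s + a + 1) b * (chain n s a * revChain n s a)) := by
  have hc : Commute (chain n s a) (revChain n (s + a + 1) b * chain n (s + a + 1) b) :=
    commute_of_mem_parabolic le_rfl (chain_mem_parabolic le_rfl le_rfl)
      (mul_mem (revChain_mem_parabolic le_rfl le_rfl) (chain_mem_parabolic le_rfl le_rfl))
  rw [chain_add_add_one_mul_revChain hn]
  calc chain n s a * revChain n (s + a + 1) b * braidGen n (s + a) * chain n (s + a + 1) b *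
        revChain n s a
      = chain n s a * revChain n (s + a + 1) b * braidGen n (s + a) *
          (revChain n (s + a + 1) b)⁻¹ * ((chain n s a)⁻¹ *
            (revChain n (s + a + 1) b * chain n (s + a + 1) b) * chain n s a) * revChain n s a := by
        rw [hc.inv_left.eq]
        group
    _ = _ := by group

theorem halfTwist_sq_mul_halfTwist_sq {s a b : ℕ} (hn : s + a + b + 2 ≤ n) :
    halfTwist n (s + a + 1) (b + 1) ^ 2 * halfTwist n s (a + 1) ^ 2 =
      revChain n (s + a + 1) b * chain n (s + a + 1) b * (chain n s a * revChain n s a) *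
        (halfTwist n (s + a + 1) b ^ 2 * halfTwist n (s + 1) a ^ 2) := by
  have hcomm : Commute (chain n s a * revChain n s a) (halfTwist n (s + a + 1) b ^ 2) :=
    commute_of_mem_parabolic (b := s + a) (b' := s + a + b) (by omega)
      (mul_mem (chain_mem_parabolic le_rfl le_rfl) (revChain_mem_parabolic le_rfl le_rfl))
      (pow_mem (halfTwist_mem_parabolic le_rfl (by omega)) 2)
  rw [halfTwist_succ_sq' (by omega), halfTwist_succ_sq (by omega), mul_assoc (_ * _),
    ← mul_assoc _ (_ * _), ← hcomm.eq]
  group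

/-- The braid `Δ · T₁⁻¹ · T₂⁻¹` of the paper, on the `2m` strands starting at `s`. -/
def twistDefect (n s m : ℕ) : BraidGroup n :=
  halfTwist n s (2 * m) * (halfTwist n s m ^ 2)⁻¹ * (halfTwist n (s + m) m ^ 2)⁻¹

theorem twistDefect_succ {s j : ℕ} (hn : s + 2 * j + 2 ≤ n) :
    twistDefect n s (j + 1) = twistDefect n (s + 1) j *
      (chain n s j * revChain n (s + j + 1) j * braidGen n (s + j) *
        (chain n s j * revChain n (s + j + 1) j)⁻¹) := by
  have hD : twistDefect n s (j + 1) = halfTwist n s (2 * j + 2) *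
      (halfTwist n (s + j + 1) (j + 1) ^ 2 * halfTwist n s (j + 1) ^ 2)⁻¹ := by
    rw [twistDefect, mul_add_one, ← add_assoc]
    group
  have hD' : twistDefect n (s + 1) j = halfTwist n (s + 1) (2 * j) *
      (halfTwist n (s + j + 1) j ^ 2 * halfTwist n (s + 1) j ^ 2)⁻¹ := by
    rw [twistDefect, add_right_comm s 1 j]
    group
  have hcomm : Commute (chain n s (2 * j + 1) * revChain n s (2 * j))
      (halfTwist n (s + j + 1) j ^ 2 * halfTwist n (s + 1) j ^ 2) :=
    commute_chain_succ_mul_revChain (by omega) (mul_mem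
      (pow_mem (halfTwist_mem_parabolic (by omega) (by omega)) 2)
      (pow_mem (halfTwist_mem_parabolic le_rfl (by omega)) 2))
  rw [hD, hD', halfTwist_add_two (by omega), halfTwist_sq_mul_halfTwist_sq (by omega)]
  generalize halfTwist n (s + j + 1) j ^ 2 * halfTwist n (s + 1) j ^ 2 = E at hcomm ⊢
  rw [mul_inv_rev, ← mul_assoc, mul_assoc _ _ E⁻¹, hcomm.inv_right.eq, two_mul,
    chain_add_add_one_mul_revChain_eq_conj_mul (by omega)]
  group

def IsQuasipositiveOfLength (j : ℕ) (x : BraidGroup n) : Prop :=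
  ∃ l : List (BraidGroup n), l.length = j ∧
    (∀ y ∈ l, ∃ (i : Fin (n - 1)) (g : BraidGroup n), y = g * PresentedGroup.of i * g⁻¹) ∧
    l.prod = x

theorem isQuasipositiveOfLength_zero_one : IsQuasipositiveOfLength 0 (1 : BraidGroup n) :=
  ⟨[], rfl, by simp, rfl⟩

theorem IsQuasipositiveOfLength.mul_conj {j t : ℕ} {x : BraidGroup n}
    (hx : IsQuasipositiveOfLength j x) (ht : t + 1 < n) (g : BraidGroup n) :
    IsQuasipositiveOfLength (j + 1) (x * (g * braidGen n t * g⁻¹)) := by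
  obtain ⟨l, rfl, hl, rfl⟩ := hx
  refine ⟨l ++ [g * braidGen n t * g⁻¹], by simp, fun y hy => ?_, by simp⟩
  rcases List.mem_append.1 hy with hy | hy
  · exact hl y hy
  · exact ⟨⟨t, by omega⟩, g, by rw [List.mem_singleton.1 hy, braidGen_eq_of]⟩

theorem isQuasipositiveOfLength_twistDefect {s j : ℕ} (hn : s + 2 * j ≤ n) :
    IsQuasipositiveOfLength j (twistDefect n s j) := by
  induction j generalizing s with
  | zero => simpa [twistDefect] using isQuasipositiveOfLength_zero_one
  | succ j ih =>
    rw [twistDefect_succ (by omega)]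
    exact (ih (by omega)).mul_conj (by omega) _

theorem prod_range_chain_sub (s m : ℕ) :
    ((List.range m).map fun j => chain n s (m - j)).prod = halfTwist n s (m + 1) := by
  induction m with
  | zero => simp
  | succ m ih =>
    simp only [List.range_succ_eq_map, List.map_cons, List.prod_cons, List.map_map,
      Function.comp_def, Nat.succ_eq_add_one, Nat.add_sub_add_right, Nat.sub_zero, ih]
    rfl

theorem braidChain_eq_chain (l : ℕ) : braidChain n l = chain n 0 l := by
  simp [braidChain, chain]

theorem garside_eq_halfTwist : garside n = halfTwist n 0 n := by
  cases n with
  | zero => rfl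
  | succ n => simp [garside, braidChain_eq_chain, prod_range_chain_sub]

theorem chain_pred_pow_eq_halfTwist_sq {s m : ℕ} (hn : s + m ≤ n) :
    chain n s (m - 1) ^ m = halfTwist n s m ^ 2 := by
  cases m with
  | zero => simp
  | succ m => exact chain_pow_succ_eq_halfTwist_sq (by omega)

theorem isQuasipositiveOfLength_garside_mul_inv {k : ℕ} (hn : n = 2 * k) :
    IsQuasipositiveOfLength k (garside n * (braidChain n (k - 1) ^ k)⁻¹ *
      (((List.range (k - 1)).map fun i => braidGen n (k + i)).prod ^ k)⁻¹) := by
  have h := isQuasipositiveOfLength_twistDefect (n := n) (s := 0) (j := k) (by omega)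
  rw [twistDefect, zero_add, ← hn] at h
  rwa [garside_eq_halfTwist, braidChain_eq_chain, chain_pred_pow_eq_halfTwist_sq (by omega),
    show ((List.range (k - 1)).map fun i => braidGen n (k + i)).prod = chain n k (k - 1) from
      rfl, chain_pred_pow_eq_halfTwist_sq (by omega)]

end BraidGroup

/-- Braid-level content of Proposition 3.1: with `k = 2g'+2` and `n = 2k`, the
braid `Δ_n · T₁⁻¹ · T₂⁻¹` — the Garside half-twist times the inverses of the full
twists `T₁ = (σ₁ ⋯ σ_{k-1})^k` and `T₂ = (σ_{k+1} ⋯ σ_{n-1})^k` on the first and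
last `k` strands — is quasipositive: it is a product of `k` conjugates of
standard generators. -/
theorem garside_quasipositive (g' : ℕ) :
    ∃ l : List (BraidGroup (4 * g' + 4)),
      l.length = 2 * g' + 2 ∧
      (∀ x ∈ l, ∃ (i : Fin (4 * g' + 4 - 1)) (g : BraidGroup (4 * g' + 4)),
        x = g * PresentedGroup.of i * g⁻¹) ∧
      l.prod = garside (4 * g' + 4) *
          (braidChain (4 * g' + 4) (2 * g' + 2 - 1) ^ (2 * g' + 2))⁻¹ *
          ((((List.range (2 * g' + 2 - 1)).map fun i =>
              braidGen (4 * g' + 4) (2 * g' + 2 + i)).prod ^ (2 * g' + 2)))⁻¹ :=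
  BraidGroup.isQuasipositiveOfLength_garside_mul_inv (by ring)
end
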